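/- For every u in the upper half-plane ℂ₊ with u ≠ u₀, there exist R > 1 and ξ ∈ ℝ such that u = √3·i·(R·e^{iξ} − 1)/(1 − R²) + u₀; moreover R = |u − conj(u₀)| / |u − u₀|. -/

import Mathlib

/-- The point `u₀ = (1 + √3 i)/2`. -/
noncomputable def u0 : ℂ := (1 + Real.sqrt 3 * Complex.I) / 2

/-!
Put `w = u - u₀` and `z = (u - conj u₀) / conj w`, so that `‖z‖ = R`. Since
`‖u - conj u₀‖² - ‖u - u₀‖² = 4 Im u Im u₀ > 0`, we get `R > 1`. Moreover
`(z - 1) conj w = u - conj u = 2i Im u` and `(1 - ‖z‖²) w conj w = -4 Im u Im u₀`; dividing these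
gives `w = 2 Im u₀ · i (z - 1) / (1 - ‖z‖²)` with `2 Im u₀ = √3`, and `z = R e^{i arg z}`.
-/

open Complex ComplexConjugate

theorem norm_sub_conj_sq (u c : ℂ) :
    ‖u - conj c‖ ^ 2 = ‖u - c‖ ^ 2 + 4 * u.im * c.im := by
  simp only [Complex.sq_norm, normSq_apply, sub_re, sub_im, conj_re, conj_im]
  ring

theorem norm_sub_lt_norm_sub_conj {u c : ℂ} (hu : 0 < u.im) (hc : 0 < c.im) :
    ‖u - c‖ < ‖u - conj c‖ := by
  refine (pow_lt_pow_iff_left₀ (norm_nonneg _) (norm_nonneg _) two_ne_zero).mp ?_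
  rw [norm_sub_conj_sq]
  nlinarith [mul_pos hu hc]

theorem one_lt_norm_sub_conj_div_norm_sub {u c : ℂ} (hu : 0 < u.im) (hc : 0 < c.im)
    (hne : u ≠ c) : 1 < ‖u - conj c‖ / ‖u - c‖ :=
  (one_lt_div (norm_pos_iff.mpr (sub_ne_zero.mpr hne))).mpr (norm_sub_lt_norm_sub_conj hu hc)

theorem sub_eq_of_mul_conj_eq {u c z : ℂ} (hu : u.im ≠ 0) (hc : c.im ≠ 0) (hne : u ≠ c)
    (hz : z * conj (u - c) = u - conj c) :
    u - c = 2 * c.im * I * (z - 1) / (1 - ‖z‖ ^ 2) := by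
  have hnorm : ‖z‖ * ‖u - c‖ = ‖u - conj c‖ := by
    rw [← hz, norm_mul, norm_conj]
  have hden : (1 - ‖z‖ ^ 2) * ‖u - c‖ ^ 2 = -4 * u.im * c.im := by
    linear_combination (-1 : ℝ) * norm_sub_conj_sq u c - (‖z‖ * ‖u - c‖ + ‖u - conj c‖) * hnorm
  have hden_ne : (1 - ‖z‖ ^ 2 : ℂ) ≠ 0 := by
    have : (1 - ‖z‖ ^ 2) * ‖u - c‖ ^ 2 ≠ 0 := by rw [hden]; simp [hu, hc]
    exact_mod_cast left_ne_zero_of_mul this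
  have hnum : (z - 1) * conj (u - c) = 2 * u.im * I := by
    rw [sub_mul, hz, one_mul, map_sub, sub_sub_sub_cancel_right, sub_conj]
    push_cast
    ring
  have hden' : (1 - ‖z‖ ^ 2 : ℂ) * ((u - c) * conj (u - c)) = -4 * u.im * c.im := by
    rw [mul_conj']
    exact_mod_cast hden
  rw [eq_div_iff hden_ne]
  apply mul_right_cancel₀ ((map_ne_zero (starRingEnd ℂ)).mpr (sub_ne_zero.mpr hne))
  linear_combination hden' - 2 * c.im * I * hnum - 4 * u.im * c.im * I_sq

theorem u0_im : u0.im = Real.sqrt 3 / 2 := by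
  simp [u0]

/-- every `u ∈ ℂ₊ \ {u₀}` can be written as
`u = √3 i (R e^{iξ} − 1)/(1 − R²) + u₀` with `R > 1`, `ξ ∈ ℝ`, and necessarily
`R = |u − conj u₀| / |u − u₀|`. -/
theorem parametrization_upper_half_plane (u : ℂ) (hu : 0 < u.im) (hne : u ≠ u0) :
    ∃ R ξ : ℝ, 1 < R ∧
      u = (Real.sqrt 3 : ℂ) * Complex.I * ((R : ℂ) * Complex.exp (Complex.I * (ξ : ℂ)) - 1)
            / (1 - (R : ℂ) ^ 2) + u0 ∧
      R = ‖u - (starRingEnd ℂ) u0‖ / ‖u - u0‖ := by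
  have hu0 : 0 < u0.im := by rw [u0_im]; positivity
  have hw : conj (u - u0) ≠ 0 := (map_ne_zero (starRingEnd ℂ)).mpr (sub_ne_zero.mpr hne)
  set z := (u - conj u0) / conj (u - u0) with hz
  have hz_mul : z * conj (u - u0) = u - conj u0 := div_mul_cancel₀ _ hw
  have hz_norm : ‖z‖ = ‖u - conj u0‖ / ‖u - u0‖ := by rw [hz, norm_div, norm_conj]
  refine ⟨‖z‖, arg z, hz_norm ▸ one_lt_norm_sub_conj_div_norm_sub hu hu0 hne, ?_, hz_norm⟩
  have hsqrt : (Real.sqrt 3 : ℂ) = 2 * u0.im := by rw [u0_im]; push_cast; ring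
  rw [mul_comm I, norm_mul_exp_arg_mul_I, hsqrt, ← sub_eq_of_mul_conj_eq hu.ne' hu0.ne' hne hz_mul]
  ring
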